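/- Let $n > 16$. Then $r(T_n'', T_n^1) = 2n-7$, where $T_n''$ and $T_n^1$ are the trees on $n$ vertices defined below. -/

import Mathlib

open SimpleGraph

/-- `Contains G H` : the graph `G` contains a copy of `H` as a subgraph. -/
def Contains {V W : Type*} (G : SimpleGraph V) (H : SimpleGraph W) : Prop :=
  ∃ f : W ↪ V, ∀ a b, H.Adj a b → G.Adj (f a) (f b)

/-- The Ramsey number `r(G₁,G₂)`: the smallest positive `p` such that every graph on `p`
vertices contains a copy of `G₁` or its complement contains a copy of `G₂`. -/
noncomputable def ramseyNumber {α β : Type*} (G₁ : SimpleGraph α) (G₂ : SimpleGraph β) : ℕ :=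
  sInf {p | 0 < p ∧ ∀ G : SimpleGraph (Fin p), Contains G G₁ ∨ Contains Gᶜ G₂}

/-- The Turán/extremal number `ex(p; L)`: maximal number of edges of a graph on `p`
vertices with no copy of `L`. -/
noncomputable def exNum {W : Type*} (p : ℕ) (L : SimpleGraph W) : ℕ :=
  sSup {m | ∃ G : SimpleGraph (Fin p), ¬ Contains G L ∧ G.edgeSet.ncard = m}

/-- The maximum degree of a graph. -/
noncomputable def maxDeg {α : Type*} (G : SimpleGraph α) : ℕ :=
  sSup {d | ∃ v, d = (G.neighborSet v).ncard}

/-- The star `K_{1,m-1}` on `m` vertices, centered at `0`. -/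
def starGraph (m : ℕ) : SimpleGraph (Fin m) :=
  SimpleGraph.fromRel (fun i _ => (i : ℕ) = 0)

/-- The double star `S(n₁,n₂)`: vertex `0` is adjacent to `1` and to the `n₁` vertices
`2,…,n₁+1`; vertex `1` is adjacent to the `n₂` vertices `n₁+2,…,n₁+n₂+1`. -/
def doubleStar (n₁ n₂ : ℕ) : SimpleGraph (Fin (n₁ + n₂ + 2)) :=
  SimpleGraph.fromRel (fun i j =>
    ((i : ℕ) = 0 ∧ (j : ℕ) = 1) ∨
    ((i : ℕ) = 0 ∧ 2 ≤ (j : ℕ) ∧ (j : ℕ) ≤ n₁ + 1) ∨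
    ((i : ℕ) = 1 ∧ n₁ + 2 ≤ (j : ℕ)))

/-- The tree `Tₙ''` with edges `v₀vᵢ (1 ≤ i ≤ n-4)`, `v₁v_{n-3}`, `v₁v_{n-2}`, `v₂v_{n-1}`. -/
def treeDD (n : ℕ) : SimpleGraph (Fin n) :=
  SimpleGraph.fromRel (fun i j =>
    ((i : ℕ) = 0 ∧ 1 ≤ (j : ℕ) ∧ (j : ℕ) ≤ n - 4) ∨
    ((i : ℕ) = 1 ∧ ((j : ℕ) = n - 3 ∨ (j : ℕ) = n - 2)) ∨
    ((i : ℕ) = 2 ∧ (j : ℕ) = n - 1))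

/-- The tree `Tₙ'''` with edges `v₀vᵢ (1 ≤ i ≤ n-4)`, `v₁v_{n-3}`, `v₂v_{n-2}`, `v₃v_{n-1}`. -/
def treeDDD (n : ℕ) : SimpleGraph (Fin n) :=
  SimpleGraph.fromRel (fun i j =>
    ((i : ℕ) = 0 ∧ 1 ≤ (j : ℕ) ∧ (j : ℕ) ≤ n - 4) ∨
    ((i : ℕ) = 1 ∧ (j : ℕ) = n - 3) ∨
    ((i : ℕ) = 2 ∧ (j : ℕ) = n - 2) ∨
    ((i : ℕ) = 3 ∧ (j : ℕ) = n - 1))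

/-- The tree `Tₙ¹` with edges `v₀vᵢ (1 ≤ i ≤ n-3)`, `v_{n-4}v_{n-2}`, `v_{n-3}v_{n-1}`. -/
def treeT1 (n : ℕ) : SimpleGraph (Fin n) :=
  SimpleGraph.fromRel (fun i j =>
    ((i : ℕ) = 0 ∧ 1 ≤ (j : ℕ) ∧ (j : ℕ) ≤ n - 3) ∨
    ((i : ℕ) = n - 4 ∧ (j : ℕ) = n - 2) ∨
    ((i : ℕ) = n - 3 ∧ (j : ℕ) = n - 1))

/-- The tree `Tₙ²` with edges `v₀vᵢ (1 ≤ i ≤ n-3)`, `v_{n-3}v_{n-2}`, `v_{n-3}v_{n-1}`. -/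
def treeT2 (n : ℕ) : SimpleGraph (Fin n) :=
  SimpleGraph.fromRel (fun i j =>
    ((i : ℕ) = 0 ∧ 1 ≤ (j : ℕ) ∧ (j : ℕ) ≤ n - 3) ∨
    ((i : ℕ) = n - 3 ∧ ((j : ℕ) = n - 2 ∨ (j : ℕ) = n - 1)))

/-!
Lower bound: on `m ≤ 2n - 8` vertices take two disjoint cliques, of sizes `n - 4` and
`m - n + 4 ≤ n - 4`. All its degrees are `< n - 4 = Δ(Tₙ'')`, and its complement, a complete
bipartite graph with parts of size `≤ n - 4`, has all degrees `< n - 3 = Δ(Tₙ¹)`.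

Upper bound: on `2n - 7` vertices, `deg_G v + deg_Gᶜ v = 2n - 8`. Both trees are stars with a few
extra vertices, so it suffices to find a centre with enough neighbours and to place the extra
vertices by hand. Split according to the first of the following that holds for some vertex `u`:
`deg_Gᶜ u ≥ n - 1`, `deg_G u ≥ n - 1`, `deg_Gᶜ u = n - 2`, `deg_G u = n - 2`, `deg_G u = n - 3`,
`deg_Gᶜ u = n - 3`; if none holds, `G` is `(n - 4)`-regular. The failure of the earlier cases
bounds all degrees from below, which forces every non-neighbour of `u` to have neighbours in
`N(u)`, and these supply the extra vertices of a copy of `Tₙ''` in `G` or of `Tₙ¹` in `Gᶜ`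
centred at `u`. In the regular case, when `N(u)` and the non-neighbourhood of `u` turn out to be
perfectly matched, the copy of `Tₙ''` is centred at a non-neighbour of `u` instead.
-/

open Finset

variable {V : Type*}

lemma le_card_sdiff_of_subset [DecidableEq V] {k : ℕ} {s t u : Finset V} (hk : k + #u ≤ #s)
    (h : s \ u ⊆ s \ t) : k ≤ #(s \ t) := by
  have := le_card_sdiff u s
  have := card_le_card h
  omega

lemma SimpleGraph.exists_adj_notMem [Fintype V] (G : SimpleGraph V) [DecidableRel G.Adj] (v : V)
    (s : Finset V) (h : #s < G.degree v) :
    ∃ x, G.Adj v x ∧ x ∉ s := by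
  rw [← card_neighborFinset_eq_degree] at h
  obtain ⟨x, hx, hxs⟩ := exists_mem_notMem_of_card_lt_card h
  exact ⟨x, (G.mem_neighborFinset _ _).1 hx, hxs⟩

lemma contains_of_core_of_pendants {W : Type*} [Fintype W] {T : SimpleGraph W}
    {G : SimpleGraph V} {k : ℕ} (κ : Fin k ↪ W) (c : Fin k ↪ V) (z : Fin k)
    (hcore : ∀ i j, T.Adj (κ i) (κ j) → G.Adj (c i) (c j))
    (hpendant : ∀ x y, T.Adj x y → y ∉ Set.range κ → x = κ z)
    (L : Finset V) (hL : ∀ v ∈ L, G.Adj (c z) v) (hLc : ∀ v ∈ L, v ∉ Set.range c)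
    (hcard : Fintype.card W ≤ k + #L) : Contains G T := by
  classical
  obtain ⟨e⟩ : Nonempty ({x // x ∉ Set.range κ} ↪ L) := by
    apply Function.Embedding.nonempty_of_card_le
    rw [Fintype.card_subtype_compl, Set.card_range_of_injective κ.injective, Fintype.card_fin,
      Fintype.card_coe]
    omega
  let f : W → V := fun x =>
    if h : x ∈ Set.range κ then c (κ.invOfMemRange ⟨x, h⟩) else e ⟨x, h⟩
  have hf_core (i) : f (κ i) = c i := by simp [f]
  have hf_pendant (x) (hx : x ∉ Set.range κ) : f x = e ⟨x, hx⟩ := dif_neg hx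
  have hf_pendant_mem (x) (hx : x ∉ Set.range κ) : f x ∈ L := hf_pendant x hx ▸ (e _).2
  have adj_of_pendant (x y) (h : T.Adj x y) (hy : y ∉ Set.range κ) : G.Adj (f x) (f y) := by
    rw [hpendant x y h hy, hf_core]
    exact hL _ (hf_pendant_mem y hy)
  have hinj : Function.Injective f := by
    intro x y hxy
    by_cases hx : x ∈ Set.range κ <;> by_cases hy : y ∈ Set.range κ
    · obtain ⟨i, rfl⟩ := hx
      obtain ⟨j, rfl⟩ := hy
      rw [hf_core, hf_core] at hxy
      rw [c.injective hxy]
    · obtain ⟨i, rfl⟩ := hx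
      exact absurd ⟨i, hf_core i ▸ hxy⟩ (hLc _ (hf_pendant_mem y hy))
    · obtain ⟨j, rfl⟩ := hy
      exact absurd ⟨j, hf_core j ▸ hxy.symm⟩ (hLc _ (hf_pendant_mem x hx))
    · rw [hf_pendant x hx, hf_pendant y hy] at hxy
      exact congrArg Subtype.val (e.injective (Subtype.ext hxy))
  refine ⟨⟨f, hinj⟩, fun x y h => ?_⟩
  by_cases hy : y ∈ Set.range κ
  · by_cases hx : x ∈ Set.range κ
    · obtain ⟨i, rfl⟩ := hx
      obtain ⟨j, rfl⟩ := hy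
      change G.Adj (f (κ i)) (f (κ j))
      rw [hf_core, hf_core]
      exact hcore i j h
    · exact (adj_of_pendant y x h.symm hx).symm
  · exact adj_of_pendant x y h hy

lemma not_contains_of_degree_lt {W : Type*} {T : SimpleGraph W} [Fintype V] {G : SimpleGraph V}
    [DecidableRel G.Adj] {v : W} {s : Finset W} (hs : ∀ x ∈ s, T.Adj v x)
    (hG : ∀ y, G.degree y < #s) : ¬ Contains G T := by
  rintro ⟨f, hf⟩
  have hsub : s.map f ⊆ G.neighborFinset (f v) := by
    intro y hy
    obtain ⟨x, hx, rfl⟩ := mem_map.1 hy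
    exact (mem_neighborFinset _ _ _).2 (hf v x (hs x hx))
  have := card_le_card hsub
  rw [card_map, card_neighborFinset_eq_degree] at this
  exact (hG (f v)).not_ge this

section

variable [Fintype V] [DecidableEq V] {G : SimpleGraph V} [DecidableRel G.Adj]

lemma contains_treeDD {n : ℕ} (hn : 6 ≤ n) {w a b p r q : V}
    (hwa : G.Adj w a) (hwb : G.Adj w b) (hap : G.Adj a p) (har : G.Adj a r) (hbq : G.Adj b q)
    (hab : a ≠ b) (hpr : p ≠ r) (hpq : p ≠ q) (hrq : r ≠ q) (hpw : p ≠ w) (hpb : p ≠ b)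
    (hrw : r ≠ w) (hrb : r ≠ b) (hqw : q ≠ w) (hqa : q ≠ a)
    (hcard : n - 6 ≤ #(G.neighborFinset w \ {a, b, p, r, q})) : Contains G (treeDD n) := by
  let κ : Fin 6 ↪ Fin n := ⟨![⟨0, by omega⟩, ⟨1, by omega⟩, ⟨2, by omega⟩, ⟨n - 3, by omega⟩,
    ⟨n - 2, by omega⟩, ⟨n - 1, by omega⟩], by
      simp only [Matrix.vecCons, Fin.cons_injective_iff]
      simp [Matrix.range_cons, Function.injective_of_subsingleton, Fin.ext_iff]
      omega⟩
  let c : Fin 6 ↪ V := ⟨![w, a, b, p, r, q], by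
    have := hwa.ne; have := hwb.ne; have := hap.ne; have := har.ne; have := hbq.ne
    simp only [Matrix.vecCons, Fin.cons_injective_iff]
    simp [Matrix.range_cons, Function.injective_of_subsingleton]
    grind⟩
  refine contains_of_core_of_pendants κ c 0 (fun i j h => ?_) (fun x y h hy => ?_)
    (G.neighborFinset w \ {a, b, p, r, q})
    (fun v hv => ?_) (fun v hv => ?_) (by simp; omega)
  · simp only [treeDD, SimpleGraph.fromRel_adj] at h
    fin_cases i <;> fin_cases j <;> simp [κ, c] at h ⊢ <;>
      first | omega | assumption | (apply SimpleGraph.Adj.symm; assumption)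
  · simp [κ, Set.range, Fin.exists_fin_succ, Fin.ext_iff] at hy
    simp only [treeDD, SimpleGraph.fromRel_adj] at h
    simp [κ, Fin.ext_iff]
    omega
  · exact (G.mem_neighborFinset _ _).1 (mem_sdiff.1 hv).1
  · rintro ⟨i, rfl⟩
    fin_cases i <;> simp [c] at hv

lemma contains_treeT1 {n : ℕ} (hn : 5 ≤ n) {w a b p q : V}
    (hwa : G.Adj w a) (hwb : G.Adj w b) (hap : G.Adj a p) (hbq : G.Adj b q)
    (hab : a ≠ b) (hpq : p ≠ q) (hpw : p ≠ w) (hpb : p ≠ b) (hqw : q ≠ w) (hqa : q ≠ a)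
    (hcard : n - 5 ≤ #(G.neighborFinset w \ {a, b, p, q})) : Contains G (treeT1 n) := by
  let κ : Fin 5 ↪ Fin n := ⟨![⟨0, by omega⟩, ⟨n - 4, by omega⟩, ⟨n - 3, by omega⟩,
    ⟨n - 2, by omega⟩, ⟨n - 1, by omega⟩], by
      simp only [Matrix.vecCons, Fin.cons_injective_iff]
      simp [Matrix.range_cons, Function.injective_of_subsingleton, Fin.ext_iff]
      omega⟩
  let c : Fin 5 ↪ V := ⟨![w, a, b, p, q], by
    have := hwa.ne; have := hwb.ne; have := hap.ne; have := hbq.ne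
    simp only [Matrix.vecCons, Fin.cons_injective_iff]
    simp [Matrix.range_cons, Function.injective_of_subsingleton]
    grind⟩
  refine contains_of_core_of_pendants κ c 0 (fun i j h => ?_) (fun x y h hy => ?_)
    (G.neighborFinset w \ {a, b, p, q}) (fun v hv => ?_) (fun v hv => ?_) (by simp; omega)
  · simp only [treeT1, SimpleGraph.fromRel_adj] at h
    fin_cases i <;> fin_cases j <;> simp [κ, c] at h ⊢ <;>
      first | omega | assumption | (apply SimpleGraph.Adj.symm; assumption)
  · simp [κ, Set.range, Fin.exists_fin_succ, Fin.ext_iff] at hy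
    simp only [treeT1, SimpleGraph.fromRel_adj] at h
    simp [κ, Fin.ext_iff]
    omega
  · exact (G.mem_neighborFinset _ _).1 (mem_sdiff.1 hv).1
  · rintro ⟨i, rfl⟩
    fin_cases i <;> simp [c] at hv

-- The neighbours of a non-neighbour `o` of `u` outside `N(u)` are non-neighbours of `u` other
-- than `o`.
lemma le_card_inter_of_compl_adj {u o : V} {k : ℕ} (huo : Gᶜ.Adj u o)
    (hk : k + Gᶜ.degree u ≤ G.degree o + 1) :
    k ≤ #(G.neighborFinset o ∩ G.neighborFinset u) := by
  have ho : o ∈ Gᶜ.neighborFinset u := (mem_neighborFinset _ _ _).2 huo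
  have hsub : G.neighborFinset o ⊆
      (G.neighborFinset o ∩ G.neighborFinset u) ∪ (Gᶜ.neighborFinset u).erase o := by
    intro x hx
    rw [mem_neighborFinset] at hx
    by_cases hux : G.Adj u x
    · simp [hx, hux]
    · refine mem_union_right _ (mem_erase.2 ⟨hx.ne', ?_⟩)
      rw [mem_neighborFinset, compl_adj]
      exact ⟨fun h => (compl_adj G u o).1 huo |>.2 (h ▸ hx.symm), hux⟩
  have := card_le_card hsub
  grw [card_union_le, card_erase_of_mem ho, card_neighborFinset_eq_degree,
    card_neighborFinset_eq_degree] at this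
  have := card_pos.2 ⟨o, ho⟩
  rw [card_neighborFinset_eq_degree] at this
  omega

lemma exists_adj_adj_of_compl_adj {u o : V} (huo : Gᶜ.Adj u o)
    (h : Gᶜ.degree u ≤ G.degree o) : ∃ a, G.Adj o a ∧ G.Adj u a := by
  obtain ⟨a, ha⟩ := card_pos.1 (le_card_inter_of_compl_adj (k := 1) huo (by omega))
  simp only [mem_inter, mem_neighborFinset] at ha
  exact ⟨a, ha⟩

lemma sum_card_neighborFinset_inter_comm (s t : Finset V) :
    ∑ a ∈ s, #(G.neighborFinset a ∩ t) = ∑ b ∈ t, #(G.neighborFinset b ∩ s) := by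
  have key (a : V) (s : Finset V) : G.neighborFinset a ∩ s = s.bipartiteAbove G.Adj a := by
    ext; simp [bipartiteAbove, and_comm]
  simp_rw [key]
  rw [sum_card_bipartiteAbove_eq_sum_card_bipartiteBelow]
  refine sum_congr rfl fun b _ => ?_
  simp [bipartiteAbove, bipartiteBelow, G.adj_comm]

lemma card_neighborFinset_inter_le_one {s t : Finset V} (hst : #t ≤ #s)
    (hs : ∀ a ∈ s, 1 ≤ #(G.neighborFinset a ∩ t)) (ht : ∀ b ∈ t, #(G.neighborFinset b ∩ s) ≤ 1) :
    ∀ a ∈ s, #(G.neighborFinset a ∩ t) ≤ 1 := by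
  by_contra! h
  obtain ⟨a, ha, ha'⟩ := h
  have hlt : ∑ _a ∈ s, 1 < ∑ a ∈ s, #(G.neighborFinset a ∩ t) :=
    sum_lt_sum hs ⟨a, ha, ha'⟩
  have hle : ∑ b ∈ t, #(G.neighborFinset b ∩ s) ≤ ∑ _b ∈ t, 1 := sum_le_sum ht
  rw [sum_card_neighborFinset_inter_comm] at hlt
  simp only [sum_const, smul_eq_mul, mul_one] at hlt hle
  omega

lemma contains_treeDD_of_sub_one_le_degree {n : ℕ} (hn : 11 ≤ n) {u : V} (hu : n - 1 ≤ G.degree u)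
    (hδ : ∀ v, n - 6 ≤ G.degree v) : Contains G (treeDD n) := by
  obtain ⟨a, hua, -⟩ := G.exists_adj_notMem u ∅ (by simp; omega)
  obtain ⟨b, hub, hb⟩ := G.exists_adj_notMem u {a} (by simp; omega)
  obtain ⟨p, hap, hp⟩ := G.exists_adj_notMem a {u, b} (by grw [card_le_two]; have := hδ a; omega)
  obtain ⟨r, har, hr⟩ := G.exists_adj_notMem a {u, b, p}
    (by grw [card_le_three]; have := hδ a; omega)
  obtain ⟨q, hbq, hq⟩ := G.exists_adj_notMem b {u, a, p, r}
    (by grw [card_le_four]; have := hδ b; omega)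
  simp only [mem_insert, mem_singleton, not_or] at hb hp hr hq
  refine contains_treeDD (by omega) hua hub hap har hbq (Ne.symm hb) (Ne.symm hr.2.2)
    (Ne.symm hq.2.2.1) (Ne.symm hq.2.2.2) hp.1 hp.2 hr.1 hr.2.1 hq.1 hq.2.1 ?_
  grw [← le_card_sdiff, card_le_five, card_neighborFinset_eq_degree]
  omega

lemma contains_treeT1_of_degree_eq_sub_two {n : ℕ} (hn : 10 ≤ n)
    (hV : Fintype.card V = 2 * n - 7) {u : V} (hu : G.degree u = n - 2)
    (hδ : ∀ v, n - 6 ≤ G.degree v) : Contains G (treeT1 n) := by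
  have hcompl : Gᶜ.degree u = n - 6 := by rw [degree_compl, hV, hu]; omega
  obtain ⟨o, huo, -⟩ := Gᶜ.exists_adj_notMem u ∅ (by simp; omega)
  obtain ⟨a, hoa, hua⟩ := exists_adj_adj_of_compl_adj huo (by have := hδ o; omega)
  obtain ⟨b, hub, hb⟩ := G.exists_adj_notMem u {a} (by simp; omega)
  obtain ⟨q, hbq, hq⟩ := G.exists_adj_notMem b {u, a, o}
    (by grw [card_le_three]; have := hδ b; omega)
  rw [compl_adj] at huo
  simp only [mem_insert, mem_singleton, not_or] at hb hq
  refine contains_treeT1 (by omega) hua hub hoa.symm hbq (Ne.symm hb) (Ne.symm hq.2.2)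
    (Ne.symm huo.1) (fun h => huo.2 (h ▸ hub)) hq.1 hq.2.1 ?_
  refine le_card_sdiff_of_subset (u := {a, b, q}) ?_ ?_
  · grw [card_le_three, card_neighborFinset_eq_degree]; omega
  · have : o ∉ G.neighborFinset u := by simpa using huo.2
    grind

lemma contains_treeDD_of_degree_eq_sub_two {n : ℕ} (hn : 11 ≤ n)
    (hV : Fintype.card V = 2 * n - 7) {u : V} (hu : G.degree u = n - 2)
    (hδ : ∀ v, n - 6 ≤ G.degree v) : Contains G (treeDD n) := by
  have hcompl : Gᶜ.degree u = n - 6 := by rw [degree_compl, hV, hu]; omega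
  obtain ⟨o, huo, -⟩ := Gᶜ.exists_adj_notMem u ∅ (by simp; omega)
  obtain ⟨b, hob, hub⟩ := exists_adj_adj_of_compl_adj huo (by have := hδ o; omega)
  obtain ⟨a, hua, ha⟩ := G.exists_adj_notMem u {b} (by simp; omega)
  obtain ⟨p, hap, hp⟩ := G.exists_adj_notMem a {u, b, o}
    (by grw [card_le_three]; have := hδ a; omega)
  obtain ⟨r, har, hr⟩ := G.exists_adj_notMem a {u, b, o, p}
    (by grw [card_le_four]; have := hδ a; omega)
  rw [compl_adj] at huo
  simp only [mem_insert, mem_singleton, not_or] at ha hp hr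
  refine contains_treeDD (by omega) hua hub hap har hob.symm ha (Ne.symm hr.2.2.2) hp.2.2
    hr.2.2.1 hp.1 hp.2.1 hr.1 hr.2.1 (Ne.symm huo.1) (fun h => huo.2 (h ▸ hua)) ?_
  refine le_card_sdiff_of_subset (u := {a, b, p, r}) ?_ ?_
  · grw [card_le_four, card_neighborFinset_eq_degree]; omega
  · have : o ∉ G.neighborFinset u := by simpa using huo.2
    grind

lemma contains_treeDD_of_degree_eq_sub_three {n : ℕ} (hn : 10 ≤ n)
    (hV : Fintype.card V = 2 * n - 7) {u : V} (hu : G.degree u = n - 3)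
    (hδ : ∀ v, n - 5 ≤ G.degree v) : Contains G (treeDD n) := by
  have hcompl : Gᶜ.degree u = n - 5 := by rw [degree_compl, hV, hu]; omega
  by_cases hfan : ∃ a, G.Adj u a ∧ 1 < #(G.neighborFinset a ∩ Gᶜ.neighborFinset u)
  · obtain ⟨a, hua, ha⟩ := hfan
    obtain ⟨p, hp, r, hr, hpr⟩ := one_lt_card.1 ha
    simp only [mem_inter, mem_neighborFinset, compl_adj] at hp hr
    obtain ⟨b, hub, hb⟩ := G.exists_adj_notMem u {a} (by simp; omega)
    obtain ⟨q, hbq, hq⟩ := G.exists_adj_notMem b {u, a, p, r}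
      (by grw [card_le_four]; have := hδ b; omega)
    simp only [mem_insert, mem_singleton, not_or] at hb hq
    refine contains_treeDD (by omega) hua hub hp.1 hr.1 hbq (Ne.symm hb) hpr
      (Ne.symm hq.2.2.1) (Ne.symm hq.2.2.2) (Ne.symm hp.2.1) (fun h => hp.2.2 (h ▸ hub))
      (Ne.symm hr.2.1) (fun h => hr.2.2 (h ▸ hub)) hq.1 hq.2.1 ?_
    refine le_card_sdiff_of_subset (u := {a, b, q}) ?_ ?_
    · grw [card_le_three, card_neighborFinset_eq_degree]; omega
    · have : p ∉ G.neighborFinset u := by simpa using hp.2.2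
      have : r ∉ G.neighborFinset u := by simpa using hr.2.2
      grind
  · push Not at hfan
    obtain ⟨o₁, ho₁, o₂, ho₂, ho⟩ := one_lt_card.1
      (by rw [card_neighborFinset_eq_degree]; omega : 1 < #(Gᶜ.neighborFinset u))
    rw [mem_neighborFinset] at ho₁ ho₂
    obtain ⟨s, ho₁s, hus⟩ := exists_adj_adj_of_compl_adj ho₁ (by have := hδ o₁; omega)
    obtain ⟨t, ho₂t, hut⟩ := exists_adj_adj_of_compl_adj ho₂ (by have := hδ o₂; omega)
    have hst : s ≠ t := by
      rintro rfl
      refine (hfan s hus).not_gt (one_lt_card.2 ⟨o₁, ?_, o₂, ?_, ho⟩) <;>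
        simp [ho₁s.symm, ho₂t.symm, ho₁, ho₂]
    obtain ⟨r, hsr, hr⟩ := G.exists_adj_notMem s {u, t, o₁, o₂}
      (by grw [card_le_four]; have := hδ s; omega)
    rw [compl_adj] at ho₁ ho₂
    simp only [mem_insert, mem_singleton, not_or] at hr
    refine contains_treeDD (by omega) hus hut ho₁s.symm hsr ho₂t.symm hst (Ne.symm hr.2.2.1)
      ho hr.2.2.2 (Ne.symm ho₁.1) (fun h => ho₁.2 (h ▸ hut)) hr.1 hr.2.1
      (Ne.symm ho₂.1) (fun h => ho₂.2 (h ▸ hus)) ?_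
    refine le_card_sdiff_of_subset (u := {s, t, r}) ?_ ?_
    · grw [card_le_three, card_neighborFinset_eq_degree]; omega
    · have : o₁ ∉ G.neighborFinset u := by simpa using ho₁.2
      have : o₂ ∉ G.neighborFinset u := by simpa using ho₂.2
      grind

lemma contains_treeT1_of_degree_eq_sub_three {n : ℕ} (hn : 7 ≤ n)
    (hV : Fintype.card V = 2 * n - 7) {u : V} (hu : G.degree u = n - 3)
    (hδ : ∀ v, n - 4 ≤ G.degree v) : Contains G (treeT1 n) := by
  have hcompl : Gᶜ.degree u = n - 5 := by rw [degree_compl, hV, hu]; omega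
  obtain ⟨o, ho, o', ho', hoo'⟩ := one_lt_card.1
    (by rw [card_neighborFinset_eq_degree]; omega : 1 < #(Gᶜ.neighborFinset u))
  rw [mem_neighborFinset] at ho ho'
  obtain ⟨a, hoa, hua⟩ := exists_adj_adj_of_compl_adj ho (by have := hδ o; omega)
  obtain ⟨b, hb, hba⟩ := exists_mem_ne
    (le_card_inter_of_compl_adj (k := 2) ho' (by have := hδ o'; omega)) a
  simp only [mem_inter, mem_neighborFinset] at hb
  rw [compl_adj] at ho ho'
  refine contains_treeT1 (by omega) hua hb.2 hoa.symm hb.1.symm (Ne.symm hba) hoo'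
    (Ne.symm ho.1) (fun h => ho.2 (h ▸ hb.2)) (Ne.symm ho'.1) (fun h => ho'.2 (h ▸ hua)) ?_
  refine le_card_sdiff_of_subset (u := {a, b}) ?_ ?_
  · grw [card_le_two, card_neighborFinset_eq_degree]; omega
  · have : o ∉ G.neighborFinset u := by simpa using ho.2
    have : o' ∉ G.neighborFinset u := by simpa using ho'.2
    grind

lemma contains_treeDD_of_regular_of_one_lt_card_inter {n : ℕ} (hn : 7 ≤ n)
    (hV : Fintype.card V = 2 * n - 7) (hreg : G.IsRegularOfDegree (n - 4)) {u a : V}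
    (hua : G.Adj u a) (ha : 1 < #(G.neighborFinset a ∩ Gᶜ.neighborFinset u)) :
    Contains G (treeDD n) := by
  have hcompl : Gᶜ.degree u = n - 4 := by rw [degree_compl, hV, hreg u]; omega
  obtain ⟨p, hp, r, hr, hpr⟩ := one_lt_card.1 ha
  simp only [mem_inter, mem_neighborFinset, compl_adj] at hp hr
  by_cases hb : ∃ b q, G.Adj u b ∧ b ≠ a ∧ G.Adj b q ∧ Gᶜ.Adj u q ∧ q ≠ p ∧ q ≠ r
  · obtain ⟨b, q, hub, hba, hbq, huq, hqp, hqr⟩ := hb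
    rw [compl_adj] at huq
    refine contains_treeDD (by omega) hua hub hp.1 hr.1 hbq (Ne.symm hba) hpr (Ne.symm hqp)
      (Ne.symm hqr) (Ne.symm hp.2.1) (fun h => hp.2.2 (h ▸ hub)) (Ne.symm hr.2.1)
      (fun h => hr.2.2 (h ▸ hub)) (Ne.symm huq.1) (fun h => huq.2 (h ▸ hua)) ?_
    refine le_card_sdiff_of_subset (u := {a, b}) ?_ ?_
    · grw [card_le_two, card_neighborFinset_eq_degree, hreg u]; omega
    · have : p ∉ G.neighborFinset u := by simpa using hp.2.2
      have : r ∉ G.neighborFinset u := by simpa using hr.2.2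
      have : q ∉ G.neighborFinset u := by simpa using huq.2
      grind
  · push Not at hb
    exfalso
    have hsub : insert u (Gᶜ.neighborFinset u) ⊆ G.neighborFinset a := by
      intro o ho
      rw [mem_insert, mem_neighborFinset] at ho
      rw [mem_neighborFinset]
      obtain rfl | huo := ho
      · exact hua.symm
      by_cases hop : o = p
      · exact hop ▸ hp.1
      by_cases hor : o = r
      · exact hor ▸ hr.1
      obtain ⟨y, hoy, huy⟩ := exists_adj_adj_of_compl_adj huo (by rw [hreg o]; omega)
      by_cases hya : y = a
      · exact hya ▸ hoy.symm
      · exact absurd (hb y o huy hya hoy.symm huo hop) hor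
    have := card_le_card hsub
    rw [card_insert_of_notMem (by simp), card_neighborFinset_eq_degree,
      card_neighborFinset_eq_degree, hcompl, hreg a] at this
    omega

lemma contains_treeDD_of_regular_of_card_inter_le_one {n : ℕ} (hn : 9 ≤ n)
    (hV : Fintype.card V = 2 * n - 7) (hreg : G.IsRegularOfDegree (n - 4)) {u : V}
    (hmatch : ∀ a, G.Adj u a → #(G.neighborFinset a ∩ Gᶜ.neighborFinset u) ≤ 1) :
    Contains G (treeDD n) := by
  have hcompl : Gᶜ.degree u = n - 4 := by rw [degree_compl, hV, hreg u]; omega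
  -- Double counting the edges between `N(u)` and the non-neighbours of `u`.
  have hO : ∀ o ∈ Gᶜ.neighborFinset u, #(G.neighborFinset o ∩ G.neighborFinset u) ≤ 1 :=
    card_neighborFinset_inter_le_one
      (by rw [card_neighborFinset_eq_degree, card_neighborFinset_eq_degree, hcompl, hreg u])
      (fun o ho => le_card_inter_of_compl_adj ((mem_neighborFinset _ _ _).1 ho)
        (by rw [hreg o]; omega))
      (fun a ha => hmatch a ((mem_neighborFinset _ _ _).1 ha))
  obtain ⟨o, huo, -⟩ := Gᶜ.exists_adj_notMem u ∅ (by simp; omega)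
  obtain ⟨a, hoa, hua⟩ := exists_adj_adj_of_compl_adj huo (by rw [hreg o]; omega)
  have hNo (y) (hoy : G.Adj o y) (huy : G.Adj u y) : y = a :=
    card_le_one.1 (hO o ((mem_neighborFinset _ _ _).2 huo)) y (by simp [hoy, huy]) a
      (by simp [hoa, hua])
  have hNa (x) (hax : G.Adj a x) (hux : Gᶜ.Adj u x) : x = o :=
    card_le_one.1 (hmatch a hua) x (by simp [hax, hux]) o (by simp [hoa.symm, huo])
  rw [compl_adj] at huo
  obtain ⟨b, hob, hb⟩ := G.exists_adj_notMem o {a} (by simp; rw [hreg o]; omega)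
  rw [mem_singleton] at hb
  have hub : Gᶜ.Adj u b :=
    (compl_adj _ _ _).2 ⟨fun h => huo.2 (h ▸ hob.symm), fun h => hb (hNo b hob h)⟩
  obtain ⟨b₁, hbb₁, hub₁⟩ := exists_adj_adj_of_compl_adj hub (by rw [hreg b]; omega)
  have hb₁a : b₁ ≠ a := by
    rintro rfl
    exact hob.ne (hNa b hbb₁.symm hub).symm
  obtain ⟨a₂, haa₂, ha₂⟩ := G.exists_adj_notMem a {u, b₁, o, b}
    (by grw [card_le_four]; rw [hreg a]; omega)
  simp only [mem_insert, mem_singleton, not_or] at ha₂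
  have hoa₂ : ¬ G.Adj o a₂ := by
    intro hoa₂
    by_cases hua₂ : G.Adj u a₂
    · exact haa₂.ne (hNo a₂ hoa₂ hua₂).symm
    · exact ha₂.2.2.1 (hNa a₂ haa₂ ((compl_adj _ _ _).2 ⟨Ne.symm ha₂.1, hua₂⟩))
  rw [compl_adj] at hub
  refine contains_treeDD (by omega) hoa hob hua.symm haa₂ hbb₁ (Ne.symm hb) (Ne.symm ha₂.1)
    hub₁.ne ha₂.2.1 huo.1 hub.1 ha₂.2.2.1 ha₂.2.2.2 (fun h => huo.2 (h ▸ hub₁)) hb₁a ?_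
  refine le_card_sdiff_of_subset (u := {a, b}) ?_ ?_
  · grw [card_le_two, card_neighborFinset_eq_degree, hreg o]; omega
  · have : u ∉ G.neighborFinset o := by simpa [G.adj_comm] using huo.2
    have : a₂ ∉ G.neighborFinset o := by simpa using hoa₂
    have : b₁ ∉ G.neighborFinset o := by simpa using fun h => hb₁a (hNo b₁ h hub₁)
    grind

lemma contains_treeDD_of_regular {n : ℕ} (hn : 9 ≤ n) (hV : Fintype.card V = 2 * n - 7)
    (hreg : G.IsRegularOfDegree (n - 4)) : Contains G (treeDD n) := by
  obtain ⟨u⟩ := Fintype.card_pos_iff.1 (by omega : 0 < Fintype.card V)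
  by_cases h : ∃ a, G.Adj u a ∧ 1 < #(G.neighborFinset a ∩ Gᶜ.neighborFinset u)
  · obtain ⟨a, hua, ha⟩ := h
    exact contains_treeDD_of_regular_of_one_lt_card_inter (by omega) hV hreg hua ha
  · push Not at h
    exact contains_treeDD_of_regular_of_card_inter_le_one hn hV hreg h

lemma contains_treeDD_of_compl_neighbors_subset_pair {n : ℕ} (hn : 6 ≤ n)
    (hV : n + 2 ≤ Fintype.card V) {u c : V} {Q : Finset V} (hQ : 2 < #Q) (huQ : u ∉ Q)
    (hcQ : c ∉ Q) (hQadj : ∀ s ∈ Q, ∀ x, Gᶜ.Adj s x → x = u ∨ x = c) :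
    Contains G (treeDD n) := by
  have hadj (s) (hs : s ∈ Q) (x) (hxu : x ≠ u) (hxc : x ≠ c) (hsx : s ≠ x) :
      G.Adj s x := by
    by_contra h
    rcases hQadj s hs x ((compl_adj _ _ _).2 ⟨hsx, h⟩) with rfl | rfl <;> contradiction
  obtain ⟨s₁, h₁, s₂, h₂, s₃, h₃, h₁₂, h₁₃, h₂₃⟩ := two_lt_card.1 hQ
  have hne (s) (hs : s ∈ Q) : s ≠ u ∧ s ≠ c := ⟨fun h => huQ (h ▸ hs), fun h => hcQ (h ▸ hs)⟩
  obtain ⟨p, -, hp⟩ := exists_mem_notMem_of_card_lt_card (t := univ)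
    (s := {u, c, s₁, s₂, s₃}) (by grw [card_le_five, card_univ]; omega)
  obtain ⟨r, -, hr⟩ := exists_mem_notMem_of_card_lt_card (t := univ)
    (s := {u, c, s₁, s₂, s₃, p}) (by grw [card_le_six, card_univ]; omega)
  obtain ⟨q, -, hq⟩ := exists_mem_notMem_of_card_lt_card (t := univ)
    (s := insert r {u, c, s₁, s₂, s₃, p})
    (by grw [card_insert_le, card_le_six, card_univ]; omega)
  simp only [mem_insert, mem_singleton, not_or] at hp hr hq
  obtain ⟨hpu, hpc, hps₁, hps₂, hps₃⟩ := hp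
  obtain ⟨hru, hrc, hrs₁, hrs₂, hrs₃, hrp⟩ := hr
  obtain ⟨hqr, hqu, hqc, hqs₁, hqs₂, hqs₃, hqp⟩ := hq
  have hdeg : Fintype.card V - 3 ≤ #(G.neighborFinset s₁) := by
    have hsub : univ \ {u, c, s₁} ⊆ G.neighborFinset s₁ := by
      intro x hx
      simp only [mem_sdiff, mem_univ, mem_insert, mem_singleton, not_or, true_and] at hx
      exact (mem_neighborFinset _ _ _).2 (hadj s₁ h₁ x hx.1 hx.2.1 (Ne.symm hx.2.2))
    grw [← hsub, ← le_card_sdiff, card_le_three, card_univ]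
  refine contains_treeDD (by omega) (hadj s₁ h₁ s₂ (hne s₂ h₂).1 (hne s₂ h₂).2 h₁₂)
    (hadj s₁ h₁ s₃ (hne s₃ h₃).1 (hne s₃ h₃).2 h₁₃) (hadj s₂ h₂ p hpu hpc (Ne.symm hps₂))
    (hadj s₂ h₂ r hru hrc (Ne.symm hrs₂)) (hadj s₃ h₃ q hqu hqc (Ne.symm hqs₃)) h₂₃
    (Ne.symm hrp) (Ne.symm hqp) (Ne.symm hqr) hps₁ hps₃ hrs₁ hrs₃ hqs₁ hqs₂ ?_
  grw [← le_card_sdiff, card_le_five]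
  omega

lemma contains_treeT1_of_sub_one_le_degree {n : ℕ} (hn : 5 ≤ n) {u a b p q : V}
    (hu : n - 1 ≤ G.degree u) (hua : G.Adj u a) (hub : G.Adj u b) (hap : G.Adj a p)
    (hbq : G.Adj b q) (hab : a ≠ b) (hpq : p ≠ q) (hpu : p ≠ u) (hpb : p ≠ b) (hqu : q ≠ u)
    (hqa : q ≠ a) : Contains G (treeT1 n) :=
  contains_treeT1 hn hua hub hap hbq hab hpq hpu hpb hqu hqa
    (by grw [← le_card_sdiff, card_le_four, card_neighborFinset_eq_degree]; omega)

-- A `Gᶜ`-edge at `N(u)` avoiding `u` and disjoint from `s₁x₁` would give `Tₙ¹` in `Gᶜ`; if there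
-- is none, all but at most one vertex of `N(u) \ {s₁, x₁}` have all their `Gᶜ`-neighbours in
-- `{u, s₁}`, or all of them have all their `Gᶜ`-neighbours in `{u, x₁}`.
lemma contains_treeDD_or_compl_contains_treeT1_of_compl_path {n : ℕ} (hn : 9 ≤ n)
    (hV : Fintype.card V = 2 * n - 7) {u s₁ x₁ : V} (hu : n - 1 ≤ Gᶜ.degree u)
    (hus₁ : Gᶜ.Adj u s₁) (hs₁x₁ : Gᶜ.Adj s₁ x₁) (hx₁u : x₁ ≠ u) :
    Contains G (treeDD n) ∨ Contains Gᶜ (treeT1 n) := by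
  by_cases h₂ : ∃ s y, Gᶜ.Adj u s ∧ s ≠ s₁ ∧ s ≠ x₁ ∧ Gᶜ.Adj s y ∧ y ≠ u ∧ y ≠ s₁ ∧ y ≠ x₁
  · obtain ⟨s, y, hus, hss₁, hsx₁, hsy, hyu, hys₁, hyx₁⟩ := h₂
    exact .inr (contains_treeT1_of_sub_one_le_degree (by omega) hu hus₁ hus hs₁x₁ hsy (Ne.symm hss₁)
      (Ne.symm hyx₁) hx₁u (Ne.symm hsx₁) hyu hys₁)
  push Not at h₂
  by_cases h₃ : ∃ a b, Gᶜ.Adj u a ∧ Gᶜ.Adj u b ∧ a ≠ b ∧ Gᶜ.Adj a s₁ ∧ Gᶜ.Adj b x₁ ∧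
      b ≠ s₁ ∧ a ≠ x₁
  · obtain ⟨a, b, hua, hub, hab, has₁, hbx₁, hbs₁, hax₁⟩ := h₃
    exact .inr (contains_treeT1_of_sub_one_le_degree (by omega) hu hua hub has₁ hbx₁ hab hs₁x₁.ne
      hus₁.ne' (Ne.symm hbs₁) hx₁u (Ne.symm hax₁))
  push Not at h₃
  set N' := Gᶜ.neighborFinset u \ {s₁, x₁}
  have hN' : n - 3 ≤ #N' := by
    grw [← le_card_sdiff, card_le_two, card_neighborFinset_eq_degree]; omega
  have hmem {s} (hs : s ∈ N') : Gᶜ.Adj u s ∧ s ≠ s₁ ∧ s ≠ x₁ := by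
    simpa [N', and_assoc] using hs
  left
  by_cases h₄ : ∃ a₀ ∈ N', Gᶜ.Adj a₀ s₁
  · obtain ⟨a₀, ha₀, ha₀s₁⟩ := h₄
    refine contains_treeDD_of_compl_neighbors_subset_pair (u := u) (c := s₁) (Q := N'.erase a₀)
      (by omega) (by omega) (by rw [card_erase_of_mem ha₀]; omega) (by simp [N']) (by simp [N'])
      fun s hs x hsx => ?_
    obtain ⟨hsa₀, hs⟩ := mem_erase.1 hs
    by_contra! hx
    have hxx₁ := h₂ s x (hmem hs).1 (hmem hs).2.1 (hmem hs).2.2 hsx hx.1 hx.2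
    exact (hmem ha₀).2.2
      (h₃ a₀ s (hmem ha₀).1 (hmem hs).1 (Ne.symm hsa₀) ha₀s₁ (hxx₁ ▸ hsx) (hmem hs).2.1)
  · push Not at h₄
    refine contains_treeDD_of_compl_neighbors_subset_pair (u := u) (c := x₁) (Q := N')
      (by omega) (by omega) (by omega) (by simp [N']) (by simp [N']) fun s hs x hsx => ?_
    by_contra! hx
    refine hx.2 (h₂ s x (hmem hs).1 (hmem hs).2.1 (hmem hs).2.2 hsx hx.1 ?_)
    rintro rfl
    exact h₄ s hs hsx

lemma contains_treeDD_or_compl_contains_treeT1_of_sub_one_le_compl_degree {n : ℕ} (hn : 9 ≤ n)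
    (hV : Fintype.card V = 2 * n - 7) {u : V} (hu : n - 1 ≤ Gᶜ.degree u) :
    Contains G (treeDD n) ∨ Contains Gᶜ (treeT1 n) := by
  by_cases h : ∃ s₁ x₁, Gᶜ.Adj u s₁ ∧ Gᶜ.Adj s₁ x₁ ∧ x₁ ≠ u
  · obtain ⟨s₁, x₁, hus₁, hs₁x₁, hx₁u⟩ := h
    exact contains_treeDD_or_compl_contains_treeT1_of_compl_path hn hV hu hus₁ hs₁x₁ hx₁u
  · push Not at h
    have hNu : u ∉ Gᶜ.neighborFinset u := by simp
    refine .inl (contains_treeDD_of_compl_neighbors_subset_pair (c := u) (by omega) (by omega)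
      (by rw [card_neighborFinset_eq_degree]; omega) hNu hNu fun s hs x hsx => ?_)
    exact .inl (h s x ((mem_neighborFinset _ _ _).1 hs) hsx)

lemma contains_treeDD_or_compl_contains_treeT1 {n : ℕ} (hn : 11 ≤ n)
    (hV : Fintype.card V = 2 * n - 7) : Contains G (treeDD n) ∨ Contains Gᶜ (treeT1 n) := by
  have hsum (v : V) : G.degree v + Gᶜ.degree v = 2 * n - 8 := by
    have := G.degree_compl v
    have := G.degree_lt_card_verts v
    omega
  by_cases h₁ : ∃ u, n - 1 ≤ Gᶜ.degree u
  · obtain ⟨u, hu⟩ := h₁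
    exact contains_treeDD_or_compl_contains_treeT1_of_sub_one_le_compl_degree (by omega) hV hu
  push Not at h₁
  by_cases h₂ : ∃ u, n - 1 ≤ G.degree u
  · obtain ⟨u, hu⟩ := h₂
    exact .inl (contains_treeDD_of_sub_one_le_degree hn hu fun v => by grind)
  push Not at h₂
  by_cases h₃ : ∃ u, Gᶜ.degree u = n - 2
  · obtain ⟨u, hu⟩ := h₃
    exact .inr (contains_treeT1_of_degree_eq_sub_two (by omega) hV hu fun v => by grind)
  push Not at h₃
  by_cases h₄ : ∃ u, G.degree u = n - 2
  · obtain ⟨u, hu⟩ := h₄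
    exact .inl (contains_treeDD_of_degree_eq_sub_two hn hV hu fun v => by grind)
  push Not at h₄
  by_cases h₅ : ∃ u, G.degree u = n - 3
  · obtain ⟨u, hu⟩ := h₅
    exact .inl (contains_treeDD_of_degree_eq_sub_three (by omega) hV hu fun v => by grind)
  push Not at h₅
  by_cases h₆ : ∃ u, Gᶜ.degree u = n - 3
  · obtain ⟨u, hu⟩ := h₆
    exact .inr (contains_treeT1_of_degree_eq_sub_three (by omega) hV hu fun v => by grind)
  push Not at h₆
  exact .inl (contains_treeDD_of_regular (by omega) hV fun v => by grind)

end

lemma card_filter_val_lt_iff_le {m k : ℕ} (hm : m ≤ 2 * k) (P : Prop) [Decidable P] :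
    #{x : Fin m | x.val < k ↔ P} ≤ k := by
  by_cases hP : P
  · simp [hP, Fin.card_filter_val_lt]
  · have := card_filter_add_card_filter_not (s := (univ : Finset (Fin m))) (fun x => x.val < k)
    simp only [hP, iff_false, card_univ, Fintype.card_fin, Fin.card_filter_val_lt] at this ⊢
    omega

lemma exists_not_contains_treeDD_not_compl_contains_treeT1 {n m : ℕ} (hn : 5 ≤ n)
    (hm : m ≤ 2 * n - 8) :
    ∃ G : SimpleGraph (Fin m), ¬ Contains G (treeDD n) ∧ ¬ Contains Gᶜ (treeT1 n) := by
  classical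
  let G := SimpleGraph.fromRel fun x y : Fin m => (x.val < n - 4 ↔ y.val < n - 4)
  refine ⟨G, not_contains_of_degree_lt (v := ⟨0, by omega⟩)
    (s := Icc ⟨1, by omega⟩ ⟨n - 4, by omega⟩) ?_ fun y => ?_,
    not_contains_of_degree_lt (v := ⟨0, by omega⟩) (s := Icc ⟨1, by omega⟩ ⟨n - 3, by omega⟩)
    ?_ fun y => ?_⟩
  · intro x hx
    simp only [mem_Icc, Fin.le_iff_val_le_val] at hx
    simp [treeDD, Fin.ext_iff]
    omega
  · have hsub : G.neighborFinset y ⊆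
        (univ.filter fun x : Fin m => x.val < n - 4 ↔ y.val < n - 4).erase y := by
      intro x hx
      simp only [mem_neighborFinset, G, fromRel_adj] at hx
      simp only [mem_erase, mem_filter, mem_univ, true_and]
      tauto
    grw [← card_neighborFinset_eq_degree, card_le_card hsub, card_erase_of_mem (by simp),
      card_filter_val_lt_iff_le (by omega), Fin.card_Icc]
    dsimp only
    omega
  · intro x hx
    simp only [mem_Icc, Fin.le_iff_val_le_val] at hx
    simp [treeT1, Fin.ext_iff]
    omega
  · have hsub : Gᶜ.neighborFinset y ⊆
        univ.filter fun x : Fin m => x.val < n - 4 ↔ ¬ y.val < n - 4 := by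
      intro x hx
      simp only [mem_neighborFinset, G, compl_adj, fromRel_adj] at hx
      simp only [mem_filter, mem_univ, true_and]
      tauto
    grw [← card_neighborFinset_eq_degree, card_le_card hsub,
      card_filter_val_lt_iff_le (by omega), Fin.card_Icc]
    dsimp only
    omega

lemma ramseyNumber_eq {α β : Type*} {G₁ : SimpleGraph α} {G₂ : SimpleGraph β} {p : ℕ}
    (hp : 0 < p) (hup : ∀ G : SimpleGraph (Fin p), Contains G G₁ ∨ Contains Gᶜ G₂)
    (hlow : ∀ m < p, ∃ G : SimpleGraph (Fin m), ¬ Contains G G₁ ∧ ¬ Contains Gᶜ G₂) :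
    ramseyNumber G₁ G₂ = p := by
  refine le_antisymm (Nat.sInf_le ⟨hp, hup⟩) (le_csInf ⟨p, hp, hup⟩ fun m ⟨_, hall⟩ => ?_)
  by_contra! h
  obtain ⟨G, h₁, h₂⟩ := hlow m h
  exact (hall G).elim h₁ h₂

theorem stmt19 (n : ℕ) (hn : 16 < n) :
    ramseyNumber (treeDD n) (treeT1 n) = 2 * n - 7 := by
  classical
  exact ramseyNumber_eq (by omega)
    (fun G => contains_treeDD_or_compl_contains_treeT1 (by omega) (Fintype.card_fin _))
    (fun m hm => exists_not_contains_treeDD_not_compl_contains_treeT1 (by omega) (by omega))
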